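/- arXiv:2604.18626 — 2 statements merged into one kernel-verified Lean document; each statement's English description precedes it below -/
import Mathlib

section
/- Let q(n,k) be the number of permutations of {1,...,n} with sort-number exactly k under SC_231. Then q(n+1, k) ≥ 2·q(n, k) for all n ≥ 1 and k ≥ 0. -/
/-- One step-by-step implementation of the `SC_231` stack-sorting machine.
`sc231Aux input stack out`: the next input entry is pushed onto the stack unless
pushing it would create a consecutive occurrence of the pattern `231` read from
top to bottom among the stack entries (i.e. the incoming `x` on top of `y`, `z`
with `z < x < y`), in which case the top of the stack is popped and appended to
the output; once the input is exhausted the remaining stack entries are popped. -/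
def sc231Aux : List ℕ → List ℕ → List ℕ → List ℕ
  | [], stack, out => out ++ stack
  | x :: rest, y :: z :: s, out =>
      if z < x ∧ x < y then sc231Aux (x :: rest) (z :: s) (out ++ [y])
      else sc231Aux rest (x :: y :: z :: s) out
  | x :: rest, stack, out => sc231Aux rest (x :: stack) out
termination_by input stack _ => 2 * input.length + stack.length
decreasing_by all_goals (simp; try omega)

/-- The consecutive-pattern-avoiding stack sort map `SC_231`. -/
def SC231 (p : List ℕ) : List ℕ := sc231Aux p [] []

/-- The list of entries that are *pre-popped* while `SC_231` processes the
input, i.e. popped while input entries still remain. -/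
def prePopsAux : List ℕ → List ℕ → List ℕ
  | [], _ => []
  | x :: rest, y :: z :: s =>
      if z < x ∧ x < y then y :: prePopsAux (x :: rest) (z :: s)
      else prePopsAux rest (x :: y :: z :: s)
  | x :: rest, stack => prePopsAux rest (x :: stack)
termination_by input stack => 2 * input.length + stack.length
decreasing_by all_goals (simp; try omega)

def prePops (p : List ℕ) : List ℕ := prePopsAux p []

/-- `p` has a peak: an interior position whose entry exceeds both neighbours. -/
def HasPeak (p : List ℕ) : Prop :=
  ∃ i, i + 2 < p.length ∧ p[i]! < p[i+1]! ∧ p[i+2]! < p[i+1]!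

/-- `p` is a permutation of `{1, …, n}` (written as a list of its entries). -/
def IsPermOf (n : ℕ) (p : List ℕ) : Prop := p.Perm (List.range' 1 n)

/-- `p` contains the (classical) pattern `q`. -/
def ContainsPat (p q : List ℕ) : Prop :=
  ∃ s : List ℕ, s.Sublist p ∧ s.length = q.length ∧
    ∀ i j, i < s.length → j < s.length → (s[i]! < s[j]! ↔ q[i]! < q[j]!)

def AvoidsPat (p q : List ℕ) : Prop := ¬ ContainsPat p q

/-- The sort-number of `p`: the least `k` with `SC_231^k(p)` peakless. -/
noncomputable def sortNum (p : List ℕ) : ℕ := sInf {k | ¬ HasPeak (SC231^[k] p)}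

/-!
Replacing the entry `1` by an adjacent pair `1 2` or `2 1` and shifting all other entries up
commutes with `SC_231` up to reversing the pair. Being the two smallest entries, the pair is pushed
in two consecutive steps, which reverses it; afterwards it sits in the stack and behaves exactly
like the single entry `1` would, until both halves are popped together at the end. The
substitution also neither creates nor destroys peaks, as `1` and the pair are valleys. Hence it
preserves the sort-number, and its two versions embed two disjoint copies of the permutations of
length `n` into those of length `n + 1`.
-/

def Creates231 (x : ℕ) : List ℕ → Prop
  | y :: z :: _ => z < x ∧ x < y
  | _ => False

lemma sc231Aux_nil (stk out : List ℕ) : sc231Aux [] stk out = out ++ stk := by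
  rw [sc231Aux]

lemma sc231Aux_push {x : ℕ} {stk : List ℕ} (h : ¬ Creates231 x stk) (rest out : List ℕ) :
    sc231Aux (x :: rest) stk out = sc231Aux rest (x :: stk) out := by
  match stk with
  | [] | [_] => rw [sc231Aux]; simp
  | _ :: _ :: _ => rw [sc231Aux]; exact if_neg h

lemma sc231Aux_pop {x y : ℕ} {stk : List ℕ} (h : Creates231 x (y :: stk))
    (rest out : List ℕ) :
    sc231Aux (x :: rest) (y :: stk) out = sc231Aux (x :: rest) stk (out ++ [y]) := by
  match stk, h with
  | _ :: _, h => rw [sc231Aux]; exact if_pos h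

theorem sc231Aux_induction {motive : List ℕ → List ℕ → List ℕ → Prop}
    (nil : ∀ stk out, motive [] stk out)
    (pop : ∀ x rest y stk out, Creates231 x (y :: stk) →
      motive (x :: rest) stk (out ++ [y]) → motive (x :: rest) (y :: stk) out)
    (push : ∀ x rest stk out, ¬ Creates231 x stk →
      motive rest (x :: stk) out → motive (x :: rest) stk out) :
    ∀ inp stk out, motive inp stk out :=
  sc231Aux.induct motive nil (fun x rest y z s out h => pop x rest y (z :: s) out h)
    (fun x rest y z s out h => push x rest (y :: z :: s) out h)
    (fun x rest stk out h => push x rest stk out <| by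
      match stk with
      | [] | [_] => exact id
      | y :: z :: s => exact (h y z s rfl).elim)

theorem sc231Aux_perm (inp stk out : List ℕ) :
    (sc231Aux inp stk out).Perm (out ++ stk ++ inp) := by
  induction inp, stk, out using sc231Aux_induction with
  | nil stk out => simp [sc231Aux_nil]
  | pop x rest y stk out h ih => simpa [sc231Aux_pop h] using ih
  | push x rest stk out h ih =>
    rw [sc231Aux_push h]
    simpa using ih.trans (by simpa using List.perm_middle.symm.append_left out)

theorem SC231_perm (p : List ℕ) : (SC231 p).Perm p := by
  simpa [SC231] using sc231Aux_perm p [] []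

theorem iterate_SC231_perm (k : ℕ) (p : List ℕ) : (SC231^[k] p).Perm p := by
  induction k with
  | zero => rfl
  | succ k ih => exact Function.iterate_succ_apply' SC231 k p ▸ (SC231_perm _).trans ih

def onePair : Bool → List ℕ
  | true => [1, 2]
  | false => [2, 1]

def splitOne (b : Bool) (l : List ℕ) : List ℕ :=
  l.flatMap fun v => if v = 1 then onePair b else [v + 1]

@[simp] lemma splitOne_nil (b : Bool) : splitOne b [] = [] := rfl

@[simp] lemma splitOne_append (b : Bool) (l₁ l₂ : List ℕ) :
    splitOne b (l₁ ++ l₂) = splitOne b l₁ ++ splitOne b l₂ := by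
  simp [splitOne]

lemma splitOne_cons_one (b : Bool) (l : List ℕ) :
    splitOne b (1 :: l) = onePair b ++ splitOne b l := by
  simp [splitOne]

lemma splitOne_cons_of_ne {x : ℕ} (hx : x ≠ 1) (b : Bool) (l : List ℕ) :
    splitOne b (x :: l) = (x + 1) :: splitOne b l := by
  simp [splitOne, hx]

lemma splitOne_of_notMem {l : List ℕ} (h : 1 ∉ l) (b : Bool) :
    splitOne b l = l.map (· + 1) := by
  induction l with
  | nil => rfl
  | cons x l ih =>
    rw [List.mem_cons, not_or] at h
    rw [splitOne_cons_of_ne (Ne.symm h.1), ih h.2, List.map_cons]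

lemma creates231_succ_splitOne {x : ℕ} (hx : x ≠ 1) (b : Bool) (stk : List ℕ) :
    Creates231 (x + 1) (splitOne b stk) ↔ Creates231 x stk := by
  match stk with
  | [] => simp [Creates231]
  | [y] =>
    by_cases hy : y = 1 <;> cases b <;> simp [splitOne, onePair, Creates231, hy]
    omega
  | y :: z :: s =>
    by_cases hy : y = 1 <;> by_cases hz : z = 1 <;> cases b <;>
      simp [splitOne, onePair, Creates231, hy, hz] <;> omega

lemma not_creates231_of_le_tail {x : ℕ} {stk : List ℕ} (h : ∀ z ∈ stk.tail, x ≤ z) :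
    ¬ Creates231 x stk := by
  match stk with
  | [] | [_] => exact id
  | _ :: z :: _ =>
    intro hc
    have := h z (by simp)
    simp only [Creates231] at hc
    omega

lemma sc231Aux_push_two {u v : ℕ} {stk : List ℕ} (hu : u ≤ 2) (hv : v ≤ 2)
    (hstk : ∀ z ∈ stk, 2 ≤ z) (rest out : List ℕ) :
    sc231Aux (u :: v :: rest) stk out = sc231Aux rest (v :: u :: stk) out := by
  have hu' : ¬ Creates231 u stk :=
    not_creates231_of_le_tail fun z hz => hu.trans (hstk z (List.mem_of_mem_tail hz))
  have hv' : ¬ Creates231 v (u :: stk) :=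
    not_creates231_of_le_tail fun z hz => hv.trans (hstk z hz)
  rw [sc231Aux_push hu', sc231Aux_push hv']

theorem sc231Aux_splitOne (b : Bool) (inp stk out : List ℕ) (h0 : 0 ∉ inp ++ stk ++ out)
    (h1 : (inp ++ stk ++ out).count 1 ≤ 1) :
    sc231Aux (splitOne b inp) (splitOne (!b) stk) (splitOne (!b) out) =
      splitOne (!b) (sc231Aux inp stk out) := by
  induction inp, stk, out using sc231Aux_induction with
  | nil stk out => simp [sc231Aux_nil]
  | pop x rest y stk out h ih =>
    obtain ⟨z, s, rfl, hzx, hxy⟩ : ∃ z s, stk = z :: s ∧ z < x ∧ x < y := by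
      match stk, h with | z :: s, h => exact ⟨z, s, rfl, h⟩
    have hz : z ≠ 0 := by rintro rfl; simp at h0
    have hx : x ≠ 1 := by omega
    have hy : y ≠ 1 := by omega
    have h' : Creates231 (x + 1) ((y + 1) :: splitOne (!b) (z :: s)) := by
      rw [← splitOne_cons_of_ne hy, creates231_succ_splitOne hx]; exact h
    rw [sc231Aux_pop h, ← ih (by simp_all) (by simp_all [List.count_cons]),
      splitOne_cons_of_ne hy, splitOne_cons_of_ne hx, sc231Aux_pop h']
    simp [splitOne_cons_of_ne hy]
  | push x rest stk out h ih =>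
    rw [sc231Aux_push h, ← ih (by simp_all) (by simp_all [List.count_cons]; omega)]
    by_cases hx : x = 1
    · subst hx
      have hstk : ∀ z ∈ splitOne (!b) stk, 2 ≤ z := by
        have h1stk : 1 ∉ stk := by simp_all [List.count_eq_zero]
        have h0stk : 0 ∉ stk := by simp_all
        rw [splitOne_of_notMem h1stk]
        grind
      rw [splitOne_cons_one, splitOne_cons_one]
      cases b <;> exact sc231Aux_push_two (by decide) (by decide) hstk _ _
    · rw [splitOne_cons_of_ne hx, splitOne_cons_of_ne hx,
        sc231Aux_push ((creates231_succ_splitOne hx _ _).not.mpr h)]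

lemma not_hasPeak_of_length_le_two {l : List ℕ} (h : l.length ≤ 2) : ¬ HasPeak l := by
  rintro ⟨i, hi, -⟩; omega

lemma hasPeak_cons_cons (a b : ℕ) (l : List ℕ) :
    HasPeak (a :: b :: l) ↔ (∃ c ∈ l.head?, a < b ∧ c < b) ∨ HasPeak (b :: l) := by
  constructor
  · rintro ⟨_ | i, hi, hab, hcb⟩
    · rcases l with _ | ⟨c, l⟩
      · simp at hi
      · exact .inl ⟨c, rfl, hab, hcb⟩
    · exact .inr ⟨i, by simpa using hi, by simpa using hab, by simpa using hcb⟩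
  · rintro (⟨c, hc, hab, hcb⟩ | ⟨i, hi, hab, hcb⟩)
    · rcases l with _ | ⟨c', l⟩
      · simp at hc
      · obtain rfl : c' = c := by simpa using hc
        exact ⟨0, by simp, hab, hcb⟩
    · exact ⟨i + 1, by simpa using hi, by simpa using hab, by simpa using hcb⟩

lemma hasPeak_map_iff {f : ℕ → ℕ} {l : List ℕ} (hf : StrictMonoOn f {x | x ∈ l}) :
    HasPeak (l.map f) ↔ HasPeak l := by
  refine exists_congr fun i => ?_
  simp only [List.length_map]
  refine and_congr_right fun hi => ?_
  simp (disch := (try simp only [List.length_map]); omega) only [getElem!_pos, List.getElem_map,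
    hf.lt_iff_lt (List.getElem_mem _) (List.getElem_mem _)]

lemma hasPeak_append_cons_iff {A : List ℕ} {m : ℕ} (hA : ∀ a ∈ A, m < a) (B : List ℕ) :
    HasPeak (A ++ m :: B) ↔ HasPeak (A ++ [m]) ∨ HasPeak (m :: B) := by
  induction A with
  | nil => simp [not_hasPeak_of_length_le_two]
  | cons a A ih =>
    rcases A with _ | ⟨a', A⟩
    · have := hA a (by simp)
      simp [hasPeak_cons_cons, not_hasPeak_of_length_le_two, this.not_gt]
    · simp only [List.cons_append, hasPeak_cons_cons, List.head?_append, List.head?_cons]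
      simp only [List.cons_append] at ih
      rw [ih fun x hx => hA x (List.mem_cons_of_mem a hx)]
      exact or_assoc.symm

lemma strictMonoOn_succ_update_one {m : ℕ} (hm : m ≤ 2) :
    StrictMonoOn (fun x => if x = 1 then m else x + 1) {x | x ≠ 0} := by
  intro x (hx : x ≠ 0) y (hy : y ≠ 0) hxy
  dsimp only
  split_ifs <;> omega

lemma hasPeak_map_succ_append_cons_cons {A B : List ℕ} (hA : ∀ a ∈ A, 2 ≤ a)
    (hB : ∀ a ∈ B, 2 ≤ a) {u v : ℕ} (hu : u ≤ 2) (hv : v ≤ 2) :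
    HasPeak (A.map (· + 1) ++ u :: v :: B.map (· + 1)) ↔ HasPeak (A ++ 1 :: B) := by
  set g : ℕ → ℕ → ℕ := fun m x => if x = 1 then m else x + 1
  have hgA : (A ++ [1]).map (g u) = A.map (· + 1) ++ [u] := by
    simp only [List.map_append, List.map_cons, List.map_nil, g]
    exact congrArg (· ++ [u]) (List.map_congr_left fun a ha => if_neg (by grind))
  have hgB : (1 :: B).map (g v) = v :: B.map (· + 1) := by
    simp only [List.map_cons, g]
    exact congrArg (v :: ·) (List.map_congr_left fun a ha => if_neg (by grind))
  have hv_top : ¬ ∃ c ∈ (B.map (· + 1)).head?, u < v ∧ c < v := by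
    rintro ⟨c, hc, -, hcv⟩
    obtain ⟨a, ha, rfl⟩ := List.mem_map.mp (List.mem_of_mem_head? hc)
    grind
  rw [hasPeak_append_cons_iff (m := u) (fun a ha => by grind),
    hasPeak_append_cons_iff (m := 1) (fun a ha => by grind), hasPeak_cons_cons, ← hgA, ← hgB,
    hasPeak_map_iff ((strictMonoOn_succ_update_one hu).mono fun x hx => by grind),
    hasPeak_map_iff ((strictMonoOn_succ_update_one hv).mono fun x hx => by grind)]
  simp only [hv_top, false_or]

lemma hasPeak_splitOne (b : Bool) {l : List ℕ} (h0 : 0 ∉ l) (h1 : l.count 1 ≤ 1) :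
    HasPeak (splitOne b l) ↔ HasPeak l := by
  by_cases hl : 1 ∈ l
  · obtain ⟨A, B, rfl⟩ := List.append_of_mem hl
    obtain ⟨hA1, hB1⟩ : 1 ∉ A ∧ 1 ∉ B := by
      simp only [List.count_append, List.count_cons_self] at h1
      exact ⟨List.count_eq_zero.mp (by omega), List.count_eq_zero.mp (by omega)⟩
    rw [splitOne_append, splitOne_cons_one, splitOne_of_notMem hA1, splitOne_of_notMem hB1]
    cases b <;>
      exact hasPeak_map_succ_append_cons_cons (by grind) (by grind) (by decide) (by decide)
  · rw [splitOne_of_notMem hl, hasPeak_map_iff fun _ _ _ _ h => Nat.succ_lt_succ h]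

theorem SC231_splitOne (b : Bool) {p : List ℕ} (h0 : 0 ∉ p) (h1 : p.count 1 ≤ 1) :
    SC231 (splitOne b p) = splitOne (!b) (SC231 p) := by
  simpa [SC231] using sc231Aux_splitOne b p [] [] (by simpa using h0) (by simpa using h1)

theorem iterate_SC231_splitOne (b : Bool) {p : List ℕ} (h0 : 0 ∉ p) (h1 : p.count 1 ≤ 1)
    (k : ℕ) : ∃ c, SC231^[k] (splitOne b p) = splitOne c (SC231^[k] p) := by
  induction k with
  | zero => exact ⟨b, rfl⟩
  | succ k ih =>
    obtain ⟨c, hc⟩ := ih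
    have hperm := iterate_SC231_perm k p
    refine ⟨!c, ?_⟩
    rw [Function.iterate_succ_apply', Function.iterate_succ_apply', hc,
      SC231_splitOne c (hperm.mem_iff.not.mpr h0) (hperm.count_eq 1 ▸ h1)]

theorem sortNum_splitOne (b : Bool) {p : List ℕ} (h0 : 0 ∉ p) (h1 : p.count 1 ≤ 1) :
    sortNum (splitOne b p) = sortNum p := by
  unfold sortNum
  congr 1
  ext k
  obtain ⟨c, hc⟩ := iterate_SC231_splitOne b h0 h1 k
  have hperm := iterate_SC231_perm k p
  show ¬ HasPeak _ ↔ ¬ HasPeak _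
  rw [hc, hasPeak_splitOne c (hperm.mem_iff.not.mpr h0) (hperm.count_eq 1 ▸ h1)]

lemma splitOne_cons_eq_splitOne_cons {b c : Bool} {x y : ℕ} {p q : List ℕ} (hx : x ≠ 0)
    (hy : y ≠ 0) (h : splitOne b (x :: p) = splitOne c (y :: q)) :
    x = y ∧ splitOne b p = splitOne c q ∧ (x = 1 → b = c) := by
  by_cases hx1 : x = 1 <;> by_cases hy1 : y = 1 <;> cases b <;> cases c <;>
    simp [splitOne_cons_one, splitOne_cons_of_ne, hx1, hy1, onePair] at h ⊢ <;> omega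

lemma splitOne_eq_splitOne_iff {b c : Bool} {p q : List ℕ} (hp : 0 ∉ p) (hq : 0 ∉ q) :
    splitOne b p = splitOne c q ↔ p = q ∧ (1 ∈ p → b = c) := by
  refine ⟨fun h => ?_, ?_⟩
  · induction p generalizing q with
    | nil => cases q with
      | nil => simp
      | cons y q => by_cases hy : y = 1 <;> cases c <;> simp [splitOne, onePair, hy] at h
    | cons x p ih =>
      cases q with
      | nil => by_cases hx : x = 1 <;> cases b <;> simp [splitOne, onePair, hx] at h
      | cons y q =>
        simp only [List.mem_cons, not_or] at hp hq
        obtain ⟨rfl, h, hbc⟩ := splitOne_cons_eq_splitOne_cons (Ne.symm hp.1) (Ne.symm hq.1) h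
        obtain ⟨rfl, hbc'⟩ := ih hp.2 hq.2 h
        exact ⟨rfl, fun h1 => (List.mem_cons.mp h1).elim (fun h1 => hbc h1.symm) hbc'⟩
  · rintro ⟨rfl, hbc⟩
    by_cases h1 : 1 ∈ p
    · rw [hbc h1]
    · rw [splitOne_of_notMem h1, splitOne_of_notMem h1]

lemma splitOne_injOn :
    Set.InjOn (fun bp : Bool × List ℕ => splitOne bp.1 bp.2)
      {bp | 0 ∉ bp.2 ∧ 1 ∈ bp.2} := by
  rintro ⟨b, p⟩ ⟨hp0, hp1⟩ ⟨c, q⟩ ⟨hq0, -⟩ h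
  obtain ⟨rfl, hbc⟩ := (splitOne_eq_splitOne_iff hp0 hq0).mp h
  exact Prod.ext (hbc hp1) rfl

lemma IsPermOf.zero_notMem {n : ℕ} {p : List ℕ} (h : IsPermOf n p) : 0 ∉ p := by
  simp [h.mem_iff]

lemma IsPermOf.count_one_le {n : ℕ} {p : List ℕ} (h : IsPermOf n p) : p.count 1 ≤ 1 :=
  List.nodup_iff_count_le_one.mp (h.nodup_iff.mpr List.nodup_range') 1

lemma IsPermOf.one_mem {n : ℕ} {p : List ℕ} (h : IsPermOf n p) (hn : 1 ≤ n) : 1 ∈ p := by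
  simp [h.mem_iff]; omega

lemma isPermOf_splitOne {n : ℕ} {p : List ℕ} (h : IsPermOf n p) (hn : 1 ≤ n) (b : Bool) :
    IsPermOf (n + 1) (splitOne b p) := by
  obtain ⟨m, rfl⟩ := Nat.exists_eq_add_of_le' hn
  have hrange : splitOne b (List.range' 1 (m + 1)) = onePair b ++ List.range' 3 m := by
    rw [List.range'_succ, splitOne_cons_one, splitOne_of_notMem (by simp),
      ← List.range'_succ_left]
  refine (h.flatMap_right _).trans ?_
  rw [← splitOne, hrange, List.range'_succ, List.range'_succ]
  cases b
  · exact .swap _ _ _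
  · rfl

lemma finite_setOf_isPermOf (n : ℕ) : {p | IsPermOf n p}.Finite :=
  (List.finite_toSet (List.range' 1 n).permutations).subset fun _ hp => List.mem_permutations.mpr hp

/-- Writing `q(n,k)` for the number of permutations of `{1,…,n}` with sort-number exactly
`k` under `SC_231`, we have `q(n+1, k) ≥ 2 · q(n, k)`. -/
theorem q_succ_ge_two_mul (n k : ℕ) (hn : 1 ≤ n) :
    2 * {p : List ℕ | IsPermOf n p ∧ sortNum p = k}.ncard ≤
      {p : List ℕ | IsPermOf (n + 1) p ∧ sortNum p = k}.ncard := by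
  set S := {p : List ℕ | IsPermOf n p ∧ sortNum p = k}
  calc 2 * S.ncard = (Set.univ ×ˢ S : Set (Bool × List ℕ)).ncard := by
        rw [Set.ncard_prod, Set.ncard_univ, Nat.card_eq_fintype_card, Fintype.card_bool]
    _ ≤ _ := by
      refine Set.ncard_le_ncard_of_injOn _ ?_ (splitOne_injOn.mono ?_)
        ((finite_setOf_isPermOf (n + 1)).subset fun _ hp => hp.1)
      · rintro ⟨b, p⟩ ⟨-, hp, rfl⟩
        exact ⟨isPermOf_splitOne hp hn b, sortNum_splitOne b hp.zero_notMem hp.count_one_le⟩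
      · rintro ⟨b, p⟩ ⟨-, hp, -⟩
        exact ⟨hp.zero_notMem, hp.one_mem hn⟩
end

section
/- No permutation p of {1,...,n} whose first entry is n has sort-number exactly 2 under SC_231. -/
/-!
Write `p = n :: t`. The maximum `n` enters an empty stack and is never popped before the end, so
`SC231 p = w ++ [n]` with `w = SC231 t`, and a peak of `w ++ [n]` is a peak of `w`. In the second
pass `n` is pushed onto whatever stack `w` has left. If some entry of `w` was pre-popped, `n` lands
strictly between the pre-popped entries and the (nonempty) final stack, all smaller than `n`: a
peak. Otherwise nothing is popped before the end and the output is `n :: w.reverse`, which still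
contains the peak of `w`. Either way `SC231^[2] p` has a peak.
-/

/-- The stack left by `SC_231` once the input is exhausted, top first. -/
def finalStack : List ℕ → List ℕ → List ℕ
  | [], s => s
  | x :: rest, y :: z :: s =>
      if z < x ∧ x < y then finalStack (x :: rest) (z :: s)
      else finalStack rest (x :: y :: z :: s)
  | x :: rest, s => finalStack rest (x :: s)
termination_by input stack => 2 * input.length + stack.length
decreasing_by all_goals (simp; try omega)

theorem sc231Aux_eq_append (inp s o : List ℕ) :
    sc231Aux inp s o = o ++ prePopsAux inp s ++ finalStack inp s := by
  induction inp, s using prePopsAux.induct generalizing o with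
  | case1 s => simp [sc231Aux, prePopsAux, finalStack]
  | case2 x rest y z s h ih =>
    rw [sc231Aux.eq_2, if_pos h, prePopsAux.eq_2, if_pos h, finalStack.eq_2, if_pos h, ih]
    simp
  | case3 x rest y z s h ih =>
    rw [sc231Aux.eq_2, if_neg h, prePopsAux.eq_2, if_neg h, finalStack.eq_2, if_neg h, ih]
  | case4 x rest s h ih =>
    rw [sc231Aux.eq_3 _ _ _ _ h, prePopsAux.eq_3 _ _ _ h, finalStack.eq_3 _ _ _ h, ih]

theorem prePopsAux_append_finalStack_perm (inp s : List ℕ) :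
    (prePopsAux inp s ++ finalStack inp s).Perm (inp ++ s) := by
  induction inp, s using prePopsAux.induct with
  | case1 s => simp [prePopsAux, finalStack]
  | case2 x rest y z s h ih =>
    rw [prePopsAux.eq_2, if_pos h, finalStack.eq_2, if_pos h]
    exact (ih.cons y).trans List.perm_middle.symm
  | case3 x rest y z s h ih =>
    rw [prePopsAux.eq_2, if_neg h, finalStack.eq_2, if_neg h]
    exact ih.trans List.perm_middle
  | case4 x rest s h ih =>
    rw [prePopsAux.eq_3 _ _ _ h, finalStack.eq_3 _ _ _ h]
    exact ih.trans List.perm_middle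

theorem sc231Aux_append (inp rest s o : List ℕ) :
    sc231Aux (inp ++ rest) s o = sc231Aux rest (finalStack inp s) (o ++ prePopsAux inp s) := by
  induction inp, s using prePopsAux.induct generalizing o with
  | case1 s => simp [prePopsAux, finalStack]
  | case2 x rest' y z s h ih =>
    rw [List.cons_append, sc231Aux.eq_2, if_pos h, ← List.cons_append, ih, prePopsAux.eq_2,
      if_pos h, finalStack.eq_2, if_pos h]
    simp
  | case3 x rest' y z s h ih =>
    rw [List.cons_append, sc231Aux.eq_2, if_neg h, ih, prePopsAux.eq_2, if_neg h,
      finalStack.eq_2, if_neg h]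
  | case4 x rest' s h ih =>
    rw [List.cons_append, sc231Aux.eq_3 _ _ _ _ h, ih, prePopsAux.eq_3 _ _ _ h,
      finalStack.eq_3 _ _ _ h]

theorem sc231Aux_cons_of_forall_lt {x : ℕ} {s : List ℕ} (hs : ∀ y ∈ s, y < x)
    (rest o : List ℕ) :
    sc231Aux (x :: rest) s o = sc231Aux rest (x :: s) o := by
  rcases s with _ | ⟨y, _ | ⟨z, s⟩⟩
  · exact sc231Aux.eq_3 _ _ _ _ (by simp)
  · exact sc231Aux.eq_3 _ _ _ _ (by simp)
  · have : ¬(z < x ∧ x < y) := fun h => (hs y (by simp)).not_gt h.2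
    rw [sc231Aux.eq_2, if_neg this]

theorem sc231Aux_stack_append_of_forall_lt {n : ℕ} {inp : List ℕ} (hinp : ∀ x ∈ inp, x < n)
    (s o : List ℕ) : sc231Aux inp (s ++ [n]) o = sc231Aux inp s o ++ [n] := by
  induction inp, s using prePopsAux.induct generalizing o with
  | case1 s => simp [sc231Aux]
  | case2 x rest y z s h ih =>
    rw [List.cons_append, List.cons_append, sc231Aux.eq_2, if_pos h, sc231Aux.eq_2, if_pos h,
      ← List.cons_append, ih hinp]
  | case3 x rest y z s h ih =>
    rw [List.cons_append, List.cons_append, sc231Aux.eq_2, if_neg h, sc231Aux.eq_2, if_neg h,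
      ← List.cons_append, ← List.cons_append, ← List.cons_append,
      ih (fun a ha => hinp a (List.mem_cons_of_mem _ ha))]
  | case4 x rest s h ih =>
    have hx : x < n := hinp x List.mem_cons_self
    have hrest : ∀ a ∈ rest, a < n := fun a ha => hinp a (List.mem_cons_of_mem _ ha)
    rcases s with _ | ⟨b, _ | ⟨c, s⟩⟩
    · rw [sc231Aux.eq_3 _ _ _ _ (by simp), sc231Aux.eq_3 _ _ _ _ (by simp)]
      exact ih hrest o
    -- with `n` directly under `b`, popping `b` would need `n < x`
    · rw [List.singleton_append, sc231Aux.eq_2, if_neg (fun h => lt_asymm hx h.1),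
        sc231Aux.eq_3 _ _ _ _ (by simp)]
      exact ih hrest o
    · exact (h b c s rfl).elim

theorem finalStack_ne_nil {inp s : List ℕ} (h : inp ≠ [] ∨ s ≠ []) :
    finalStack inp s ≠ [] := by
  induction inp, s using prePopsAux.induct with
  | case1 s => simpa [finalStack] using h
  | case2 x rest y z s h' ih => rw [finalStack.eq_2, if_pos h']; exact ih (by simp)
  | case3 x rest y z s h' ih => rw [finalStack.eq_2, if_neg h']; exact ih (by simp)
  | case4 x rest s h' ih => rw [finalStack.eq_3 _ _ _ h']; exact ih (by simp)

theorem finalStack_of_prePopsAux_eq_nil {inp s : List ℕ} (h : prePopsAux inp s = []) :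
    finalStack inp s = inp.reverse ++ s := by
  induction inp, s using prePopsAux.induct with
  | case1 s => simp [finalStack]
  | case2 x rest y z s h' ih => simp [prePopsAux.eq_2, h'] at h
  | case3 x rest y z s h' ih =>
    rw [prePopsAux.eq_2, if_neg h'] at h
    rw [finalStack.eq_2, if_neg h', ih h]
    simp
  | case4 x rest s h' ih =>
    rw [prePopsAux.eq_3 _ _ _ h'] at h
    rw [finalStack.eq_3 _ _ _ h', ih h]
    simp

theorem hasPeak_iff {l : List ℕ} :
    HasPeak l ↔ ∃ a b c, [a, b, c] <:+: l ∧ a < b ∧ c < b := by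
  constructor
  · rintro ⟨i, hi, hab, hcb⟩
    refine ⟨l[i]!, l[i + 1]!, l[i + 2]!, ⟨l.take i, l.drop (i + 3), ?_⟩, hab, hcb⟩
    conv_rhs => rw [← List.take_append_drop i l, List.drop_eq_getElem_cons (by omega),
      List.drop_eq_getElem_cons (by omega), List.drop_eq_getElem_cons hi]
    simp [List.getElem?_eq_getElem (by omega : i < l.length),
      List.getElem?_eq_getElem (by omega : i + 1 < l.length), List.getElem?_eq_getElem hi]
  · rintro ⟨a, b, c, ⟨s, t, rfl⟩, hab, hcb⟩
    refine ⟨s.length, by simp, ?_, ?_⟩ <;> simpa [getElem!_pos, List.getElem_append_right]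

theorem HasPeak.mono {l l' : List ℕ} (h : HasPeak l) (hl : l <:+: l') : HasPeak l' := by
  obtain ⟨a, b, c, habc, hab, hcb⟩ := hasPeak_iff.1 h
  exact hasPeak_iff.2 ⟨a, b, c, habc.trans hl, hab, hcb⟩

theorem HasPeak.reverse {l : List ℕ} (h : HasPeak l) : HasPeak l.reverse := by
  obtain ⟨a, b, c, habc, hab, hcb⟩ := hasPeak_iff.1 h
  exact hasPeak_iff.2 ⟨c, b, a, List.reverse_infix.2 habc, hcb, hab⟩

theorem HasPeak.of_append_singleton {l : List ℕ} {n : ℕ} (h : HasPeak (l ++ [n]))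
    (hl : ∀ x ∈ l, x ≤ n) : HasPeak l := by
  obtain ⟨a, b, c, ⟨s, t, hst⟩, hab, hcb⟩ := hasPeak_iff.1 h
  rcases t.eq_nil_or_concat with rfl | ⟨t', x, rfl⟩
  · have hst' : (s ++ [a, b]) ++ [c] = l ++ [n] := by simpa using hst
    obtain ⟨hl', hcn⟩ := List.append_inj' hst' rfl
    obtain rfl : c = n := List.singleton_inj.1 hcn
    exact absurd (hl b (by simp [← hl'])) (not_le.2 hcb)
  · have hst' : (s ++ [a, b, c] ++ t') ++ [x] = l ++ [n] := by simpa using hst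
    have hl' := List.append_inj_left' hst' rfl
    exact hasPeak_iff.2 ⟨a, b, c, ⟨s, t', hl'⟩, hab, hcb⟩

theorem hasPeak_append_cons {l r : List ℕ} {n : ℕ} (hl : l ≠ []) (hr : r ≠ [])
    (h : ∀ x ∈ l ++ r, x < n) : HasPeak (l ++ n :: r) := by
  obtain ⟨l', a, rfl⟩ := (List.eq_nil_or_concat l).resolve_left hl
  obtain ⟨c, r', rfl⟩ := List.exists_cons_of_ne_nil hr
  exact hasPeak_iff.2 ⟨a, n, c, ⟨l', r', by simp⟩, h a (by simp), h c (by simp)⟩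

theorem SC231_eq_append (p : List ℕ) : SC231 p = prePops p ++ finalStack p [] := by
  rw [SC231, sc231Aux_eq_append, List.nil_append, prePops]

theorem prePops_append_finalStack_perm (p : List ℕ) : (prePops p ++ finalStack p []).Perm p := by
  simpa [prePops] using prePopsAux_append_finalStack_perm p []

theorem SC231_cons_of_forall_lt {n : ℕ} {t : List ℕ} (ht : ∀ x ∈ t, x < n) :
    SC231 (n :: t) = SC231 t ++ [n] := by
  rw [SC231, sc231Aux.eq_3 _ _ _ _ (by simp)]
  exact sc231Aux_stack_append_of_forall_lt ht [] []

theorem SC231_append_of_forall_lt {n : ℕ} {w : List ℕ} (hw : ∀ x ∈ w, x < n) :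
    SC231 (w ++ [n]) = prePops w ++ n :: finalStack w [] := by
  have hF : ∀ x ∈ finalStack w [], x < n := fun x hx =>
    hw x ((prePops_append_finalStack_perm w).subset (List.mem_append_right _ hx))
  rw [SC231, sc231Aux_append, sc231Aux_cons_of_forall_lt hF, sc231Aux.eq_1, List.nil_append,
    prePops]

theorem HasPeak.SC231_append_of_forall_lt {n : ℕ} {w : List ℕ} (hw : ∀ x ∈ w, x < n)
    (h : HasPeak (w ++ [n])) : HasPeak (SC231 (w ++ [n])) := by
  rw [_root_.SC231_append_of_forall_lt hw]
  by_cases hpre : prePops w = []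
  · rw [hpre, finalStack_of_prePopsAux_eq_nil hpre, List.append_nil, List.nil_append]
    exact (h.of_append_singleton fun x hx => (hw x hx).le).reverse.mono
      (List.suffix_cons n _).isInfix
  · have hw' : w ≠ [] := by
      rintro rfl
      exact hpre (by rw [prePops, prePopsAux.eq_1])
    exact hasPeak_append_cons hpre (finalStack_ne_nil (.inl hw'))
      fun x hx => hw x ((prePops_append_finalStack_perm w).subset hx)

theorem hasPeak_iterate_of_sortNum_eq_succ {p : List ℕ} {k : ℕ} (h : sortNum p = k + 1) :
    HasPeak (SC231^[k] p) ∧ ¬HasPeak (SC231^[k + 1] p) := by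
  have hne : {k | ¬HasPeak (SC231^[k] p)}.Nonempty := by
    by_contra hempty
    rw [Set.not_nonempty_iff_eq_empty] at hempty
    simp [sortNum, hempty] at h
  refine ⟨not_not.1 (Nat.notMem_of_lt_sInf (?_ : k < sortNum p)), h ▸ Nat.sInf_mem hne⟩
  omega

theorem IsPermOf.forall_lt_of_cons {n : ℕ} {t : List ℕ} (hp : IsPermOf n (n :: t)) :
    ∀ x ∈ t, x < n := by
  intro x hx
  have hxn : x ≠ n := by
    rintro rfl
    exact (List.nodup_cons.1 (hp.nodup_iff.2 List.nodup_range')).1 hx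
  have := List.mem_range'_1.1 (hp.subset (List.mem_cons_of_mem _ hx))
  omega

/-- No permutation of `{1,…,n}` whose first entry is `n` has sort-number exactly `2`. -/
theorem first_entry_max_sortNum_ne_two (n : ℕ) (p : List ℕ) (hp : IsPermOf n p)
    (hhead : p.head? = some n) : sortNum p ≠ 2 := by
  obtain ⟨t, rfl⟩ : ∃ t, p = n :: t := ⟨p.tail, List.eq_cons_of_mem_head? hhead⟩
  have ht := hp.forall_lt_of_cons
  have hw : ∀ x ∈ SC231 t, x < n := fun x hx => ht x ((SC231_perm t).subset hx)
  intro h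
  obtain ⟨hpeak, hsorted⟩ := hasPeak_iterate_of_sortNum_eq_succ h
  rw [Function.iterate_one, SC231_cons_of_forall_lt ht] at hpeak
  rw [Function.iterate_succ_apply', Function.iterate_one, SC231_cons_of_forall_lt ht] at hsorted
  exact hsorted (hpeak.SC231_append_of_forall_lt hw)
end
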